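/- arXiv:1905.01057 — 3 statements merged into one kernel-verified Lean document; each statement's English description precedes it below -/
import Mathlib

section
/- Let d ≥ 1 and let E : ℕ → ℤ be a sequence with E₀ = 1, Eᵢ ≥ 0 for all i, and let r ≥ 1 be the maximal index with E_r ≠ 0 (Eᵢ = 0 for i > r ≤ d). Assume E_j·E₁ - E_{j+1} ≥ 0 for 1 ≤ j+1 ≤ d, and E_j² - E_{j-1}·E_{j+1} ≥ 0 for 0 ≤ 2j ≤ d. Set s := min(r-1, ⌊d/2⌋) and assume s > 0. Then either Eᵢ = 1 for every i = 1, …, s+1, or Eᵢ ≥ 2 for every i = 1, …, s. -/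
theorem stmt_1 (d : ℤ) (hd : 1 ≤ d) (E : ℤ → ℤ)
    (hE0 : E 0 = 1) (hEnn : ∀ i, 0 ≤ E i)
    (r : ℤ) (hr1 : 1 ≤ r) (hrd : r ≤ d)
    (hEr : E r ≠ 0) (hEzero : ∀ i : ℤ, i < 0 ∨ r < i → E i = 0)
    (hS1 : ∀ j : ℤ, 1 ≤ j + 1 → j + 1 ≤ d → 0 ≤ E j * E 1 - E (j + 1))
    (hS2 : ∀ j : ℤ, 0 ≤ 2 * j → 2 * j ≤ d → 0 ≤ E j ^ 2 - E (j - 1) * E (j + 1))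
    (hs : 0 < min (r - 1) (d / 2)) :
    (∀ i : ℤ, 1 ≤ i → i ≤ min (r - 1) (d / 2) + 1 → E i = 1) ∨
      (∀ i : ℤ, 1 ≤ i → i ≤ min (r - 1) (d / 2) → 2 ≤ E i) := by
  set s := min (r - 1) (d / 2) with hsdef
  have hsr : s ≤ r - 1 := min_le_left _ _
  have hsd : s ≤ d / 2 := min_le_right _ _
  have h2s : 2 * s ≤ d := by omega
  -- propagation of zeros: if E m = 0 for some 0 ≤ m ≤ r, then E r = 0, contradiction
  have hpos : ∀ m : ℤ, 0 ≤ m → m ≤ r → E m ≠ 0 := by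
    intro m hm0 hmr hm
    have key : ∀ k : ℤ, m ≤ k → (k ≤ r → E k = 0) := by
      refine Int.le_induction (fun _ => hm) ?_
      intro n hn ih hnr
      have h1 := hS1 n (by linarith) (by linarith)
      have h0 : E n = 0 := ih (by linarith)
      rw [h0, zero_mul] at h1
      have h2 := hEnn (n + 1)
      omega
    exact hEr (key r hmr le_rfl)
  have hE1 : 1 ≤ E 1 := by
    have h1 := hpos 1 (by norm_num) hr1
    have h2 := hEnn 1
    omega
  by_cases h1 : E 1 = 1
  · left
    have hle : ∀ i : ℤ, 1 ≤ i → (i ≤ r → E i ≤ 1) := by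
      refine Int.le_induction (fun _ => by omega) ?_
      intro n hn ih hnr
      have h := hS1 n (by linarith) (by linarith)
      have hEn : E n ≤ 1 := ih (by linarith)
      have hEnn' := hEnn n
      nlinarith
    intro i hi his
    have hir : i ≤ r := by omega
    have h2 := hle i hi hir
    have h3 := hpos i (by omega) hir
    have h4 := hEnn i
    omega
  · right
    have hE1' : 2 ≤ E 1 := by omega
    refine Int.le_induction (fun _ => hE1') ?_
    intro n hn ih hns
    have hEn : 2 ≤ E n := ih (by omega)
    have hne1 : E (n + 1) ≠ 0 := hpos (n + 1) (by omega) (by omega)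
    have hnn1 := hEnn (n + 1)
    by_contra hc
    have hE1eq : E (n + 1) = 1 := by omega
    have h2 := hS2 (n + 1) (by omega) (by omega)
    simp only [add_sub_cancel_right] at h2
    have h2' : 0 ≤ E (n + 1) ^ 2 - E n * E (n + 2) := by
      rw [show n + 2 = n + 1 + 1 by ring]; exact h2
    have hnn2 := hEnn (n + 2)
    have hEn2 : E (n + 2) ≤ 0 := by
      nlinarith [mul_nonneg (by linarith : (0:ℤ) ≤ E n - 2) hnn2]
    have hz : E (n + 2) = 0 := by omega
    exact hpos (n + 2) (by omega) (by omega) hz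
end

section
/- Let d ≥ 1 and let E : ℕ → ℤ with E₀ = 1, Eᵢ ≥ 0 for all i, and let r be the maximal index with E_r ≠ 0; assume 1 < r ≤ ⌊(d+1)/2⌋. Assume the inequalities: E_j·E₁ - E_{j+1} ≥ 0 for 1 ≤ j+1 ≤ d; E_j² - E_{j-1}E_{j+1} ≥ 0 for 0 ≤ 2j ≤ d; and E₁(E_j² - E_{j-1}E_{j+1}) - E_{j+1}E_j + E_{j+2}E_{j-1} ≥ 0 for 1 ≤ 2j+1 ≤ d. Then Eᵢ ≥ 2 for every i = 1, …, r-1. -/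
theorem stmt_2 (d : ℤ) (hd : 1 ≤ d) (E : ℤ → ℤ)
    (hE0 : E 0 = 1) (hEnn : ∀ i, 0 ≤ E i)
    (r : ℤ) (hr1 : 1 < r) (hrd : r ≤ (d + 1) / 2)
    (hEr : E r ≠ 0) (hEzero : ∀ i : ℤ, i < 0 ∨ r < i → E i = 0)
    (hS1 : ∀ j : ℤ, 1 ≤ j + 1 → j + 1 ≤ d → 0 ≤ E j * E 1 - E (j + 1))
    (hS2 : ∀ j : ℤ, 0 ≤ 2 * j → 2 * j ≤ d → 0 ≤ E j ^ 2 - E (j - 1) * E (j + 1))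
    (hS3 : ∀ j : ℤ, 1 ≤ 2 * j + 1 → 2 * j + 1 ≤ d →
      0 ≤ E 1 * (E j ^ 2 - E (j - 1) * E (j + 1)) - E (j + 1) * E j + E (j + 2) * E (j - 1)) :
    ∀ i : ℤ, 1 ≤ i → i ≤ r - 1 → 2 ≤ E i := by
  have h2r : 2 * r ≤ d + 1 := by omega
  -- Step 1: positivity on [0, r]
  have hpos : ∀ i : ℤ, 0 ≤ i → i ≤ r → 1 ≤ E i := by
    intro i h0 hir
    by_contra h
    have hEi : E i = 0 := by have := hEnn i; omega
    have key : ∀ n : ℕ, i + n ≤ r → E (i + n) = 0 := by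
      intro n
      induction n with
      | zero => intro _; simpa using hEi
      | succ n ih =>
        intro hle
        have hc : ((n + 1 : ℕ) : ℤ) = (n : ℤ) + 1 := by push_cast; ring
        rw [hc] at hle ⊢
        have h1 : i + (n : ℤ) ≤ r := by omega
        have h2 := ih h1
        have h3 := hS1 (i + (n : ℤ)) (by omega) (by omega)
        rw [h2] at h3
        have h4 := hEnn (i + (n : ℤ) + 1)
        have : E (i + (n : ℤ) + 1) = 0 := by omega
        rw [show i + ((n : ℤ) + 1) = i + (n : ℤ) + 1 by ring]
        exact this
    have hcast : i + ((r - i).toNat : ℤ) = r := by omega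
    have := key (r - i).toNat (by omega)
    rw [hcast] at this
    exact hEr this
  -- Step 2: main claim
  intro i hi1 hir
  by_contra h
  have hEi : E i = 1 := by have := hpos i (by omega) (by omega); omega
  have key2 : ∀ n : ℕ, i + n ≤ r → E (i + n) = 1 := by
    intro n
    induction n with
    | zero => intro _; simpa using hEi
    | succ n ih =>
      intro hle
      have hc : ((n + 1 : ℕ) : ℤ) = (n : ℤ) + 1 := by push_cast; ring
      rw [hc] at hle ⊢
      set j : ℤ := i + (n : ℤ) with hj
      have h1 : j ≤ r := by omega
      have h2 : E j = 1 := ih (by omega)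
      have h3 := hS2 j (by omega) (by omega)
      have h4 : 1 ≤ E (j - 1) := hpos (j - 1) (by omega) (by omega)
      have h5 : 1 ≤ E (j + 1) := hpos (j + 1) (by omega) (by omega)
      rw [h2] at h3
      have h6 : E (j + 1) ≤ 1 := by nlinarith
      rw [show i + ((n : ℤ) + 1) = j + 1 by rw [hj]; ring]
      omega
  have hcast1 : i + ((r - 1 - i).toNat : ℤ) = r - 1 := by omega
  have hcast2 : i + ((r - i).toNat : ℤ) = r := by omega
  have hrm1 : E (r - 1) = 1 := by
    have := key2 (r - 1 - i).toNat (by omega); rw [hcast1] at this; exact this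
  have hrr : E r = 1 := by
    have := key2 (r - i).toNat (by omega); rw [hcast2] at this; exact this
  have hrm2 : 1 ≤ E (r - 2) := hpos (r - 2) (by omega) (by omega)
  have hzr1 : E (r + 1) = 0 := hEzero (r + 1) (Or.inr (by omega))
  have hfin := hS3 (r - 1) (by omega) (by omega)
  rw [show r - 1 + 1 = r by ring, show r - 1 + 2 = r + 1 by ring,
    show r - 1 - 1 = r - 2 by ring, hrm1, hrr, hzr1] at hfin
  have hE1 : 0 ≤ E 1 := hEnn 1
  nlinarith
end

section
/- Let d ≥ 1 and let E : ℕ → ℤ with E₀ = 1, Eᵢ ≥ 0, and let r be maximal with E_r ≠ 0; assume 1 < r ≤ ⌊(d+1)/2⌋, that Eᵢ = 2 for every i = 1, …, r-1, and E_r = 1. Assume moreover that E₁(E_j² - E_{j-1}E_{j+1}) - E_{j+1}E_j + E_{j+2}E_{j-1} ≥ 0 whenever 1 ≤ 2j+1 ≤ d, and E_j² - E_{j-1}E_{j+1} ≥ 0 whenever 0 ≤ 2j ≤ d. Then r ≤ 3. -/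
theorem stmt_3 (d : ℤ) (hd : 1 ≤ d) (E : ℤ → ℤ)
    (hE0 : E 0 = 1) (hEnn : ∀ i, 0 ≤ E i)
    (r : ℤ) (hr1 : 1 < r) (hrd : r ≤ (d + 1) / 2)
    (hEr : E r ≠ 0) (hEzero : ∀ i : ℤ, i < 0 ∨ r < i → E i = 0)
    (hE2 : ∀ i : ℤ, 1 ≤ i → i ≤ r - 1 → E i = 2) (hErone : E r = 1)
    (hS3 : ∀ j : ℤ, 1 ≤ 2 * j + 1 → 2 * j + 1 ≤ d →
      0 ≤ E 1 * (E j ^ 2 - E (j - 1) * E (j + 1)) - E (j + 1) * E j + E (j + 2) * E (j - 1))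
    (hS2 : ∀ j : ℤ, 0 ≤ 2 * j → 2 * j ≤ d → 0 ≤ E j ^ 2 - E (j - 1) * E (j + 1)) :
    r ≤ 3 := by
  by_contra hcon
  push_neg at hcon
  have e1 := hE2 1 (by omega) (by omega)
  have e2 := hE2 (r - 2) (by omega) (by omega)
  have e3 := hE2 (r - 3) (by omega) (by omega)
  have e4 := hE2 (r - 1) (by omega) (by omega)
  have h := hS3 (r - 2) (by omega) (by omega)
  simp only [show r - 2 - 1 = r - 3 from by ring, show r - 2 + 1 = r - 1 from by ring,
    show r - 2 + 2 = r from by ring, e1, e2, e3, e4, hErone] at h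
  norm_num at h
end
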